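/- arXiv:2407.01813 — 2 statements merged into one kernel-verified Lean document; each statement's English description precedes it below -/
import Mathlib

section
/- For any matrices X_1, ..., X_n in the Stiefel manifold St_F(d, r) (matrices X ∈ F^{d×r} with X*X = I_r, F = R or C) with n ≥ 2, the minimum pairwise Frobenius distance min_{i≠j} ||X_i - X_j||_Fro is at most sqrt(2rn/(n-1)). -/
open Matrix

/-- The Frobenius (chordal) distance between two matrices. -/
noncomputable def frobDist {𝕜 : Type*} [RCLike 𝕜] {d r : ℕ}
    (X Y : Matrix (Fin d) (Fin r) 𝕜) : ℝ :=
  Real.sqrt (∑ i, ∑ j, ‖X i j - Y i j‖ ^ 2)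

/-!
Vectorise the matrices into a real inner product space, where the Frobenius distance is the
norm of the difference and every Stiefel matrix has squared norm `tr (XᴴX) = r`. For any vectors
`v₁, …, vₙ` of squared norm `r`, `∑ᵢ ∑ⱼ ‖vᵢ - vⱼ‖² = 2n ∑ᵢ ‖vᵢ‖² - 2‖∑ᵢ vᵢ‖² ≤ 2n²r`, and the
`n(n-1)` off-diagonal terms cannot all exceed their average `2rn/(n-1)`.
-/

section SimplexBound

variable {E ι : Type*} [NormedAddCommGroup E] [InnerProductSpace ℝ E] [Fintype ι]

theorem sum_sum_norm_sub_sq (v : ι → E) :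
    ∑ i, ∑ j, ‖v i - v j‖ ^ 2 =
      2 * Fintype.card ι * ∑ i, ‖v i‖ ^ 2 - 2 * ‖∑ i, v i‖ ^ 2 := by
  simp_rw [norm_sub_sq_real, Finset.sum_add_distrib, Finset.sum_sub_distrib, ← Finset.mul_sum,
    ← inner_sum, ← sum_inner, real_inner_self_eq_norm_sq, Finset.sum_const, Finset.card_univ,
    nsmul_eq_mul]
  rw [← Finset.mul_sum]
  ring

theorem sum_sum_norm_sub_sq_le (v : ι → E) :
    ∑ i, ∑ j, ‖v i - v j‖ ^ 2 ≤ 2 * Fintype.card ι * ∑ i, ‖v i‖ ^ 2 := by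
  rw [sum_sum_norm_sub_sq]
  linarith [sq_nonneg ‖∑ i, v i‖]

theorem exists_ne_norm_sub_sq_le (hι : 2 ≤ Fintype.card ι) (v : ι → E) :
    ∃ i j, i ≠ j ∧ ‖v i - v j‖ ^ 2 ≤ 2 * (∑ i, ‖v i‖ ^ 2) / (Fintype.card ι - 1) := by
  set n : ℝ := (Fintype.card ι : ℝ)
  have hn : 1 < n := Nat.one_lt_cast.mpr hι
  have hne : (Finset.univ : Finset ι).offDiag.Nonempty := by
    obtain ⟨a, b, hab⟩ := Fintype.exists_pair_of_one_lt_card hι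
    exact ⟨(a, b), by simpa using hab⟩
  have hcard : ((Finset.univ : Finset ι).offDiag.card : ℝ) = n * (n - 1) := by
    rw [Finset.offDiag_card, Nat.cast_sub (Nat.le_mul_self _), Finset.card_univ]
    push_cast
    ring
  have hoff : ∑ p ∈ (Finset.univ : Finset ι).offDiag, ‖v p.1 - v p.2‖ ^ 2 =
      ∑ i, ∑ j, ‖v i - v j‖ ^ 2 := by
    rw [← Finset.sum_product', Finset.univ_product_univ]
    refine Finset.sum_subset (Finset.subset_univ _) fun p _ hp => ?_
    simp_all
  obtain ⟨⟨i, j⟩, hij, hle⟩ := Finset.exists_le_of_sum_le hne (g := fun _ =>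
    2 * (∑ i, ‖v i‖ ^ 2) / (n - 1)) <| by
    rw [hoff, Finset.sum_const, nsmul_eq_mul, hcard]
    calc ∑ i, ∑ j, ‖v i - v j‖ ^ 2 ≤ 2 * n * ∑ i, ‖v i‖ ^ 2 := sum_sum_norm_sub_sq_le v
      _ = n * (n - 1) * (2 * (∑ i, ‖v i‖ ^ 2) / (n - 1)) := by
        field_simp [(sub_pos.mpr hn).ne']
  exact ⟨i, j, (Finset.mem_offDiag.mp hij).2.2, hle⟩

end SimplexBound

section Vectorisation

variable {𝕜 : Type*} [RCLike 𝕜] {m n : Type*} [Fintype m] [Fintype n] [DecidableEq n]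

theorem frobDist_eq_norm_sub {d r : ℕ} (X Y : Matrix (Fin d) (Fin r) 𝕜) :
    frobDist X Y =
      ‖(WithLp.toLp 2 X.vec : EuclideanSpace 𝕜 (Fin r × Fin d)) - WithLp.toLp 2 Y.vec‖ := by
  rw [frobDist, EuclideanSpace.norm_eq, Fintype.sum_prod_type, Finset.sum_comm]
  rfl

theorem norm_toLp_vec_sq_of_conjTranspose_mul_self_eq_one {X : Matrix m n 𝕜}
    (hX : Xᴴ * X = 1) :
    ‖(WithLp.toLp 2 X.vec : EuclideanSpace 𝕜 (n × m))‖ ^ 2 = Fintype.card n := by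
  rw [@norm_sq_eq_re_inner 𝕜, EuclideanSpace.inner_toLp_toLp, dotProduct_comm,
    star_vec_dotProduct_vec, hX, trace_one]
  simp

end Vectorisation

theorem stiefel_simplex_bound {𝕜 : Type*} [RCLike 𝕜] (d r n : ℕ) (hn : 2 ≤ n)
    (X : Fin n → Matrix (Fin d) (Fin r) 𝕜)
    (hSt : ∀ i, (X i)ᴴ * X i = 1) :
    ∃ i j : Fin n, i ≠ j ∧
      frobDist (X i) (X j) ≤ Real.sqrt (2 * r * n / ((n : ℝ) - 1)) := by
  let _ := InnerProductSpace.rclikeToReal 𝕜 (EuclideanSpace 𝕜 (Fin r × Fin d))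
  let v (i : Fin n) : EuclideanSpace 𝕜 (Fin r × Fin d) := WithLp.toLp 2 (X i).vec
  have hv : ∑ i, ‖v i‖ ^ 2 = n * r := by
    simp [v, norm_toLp_vec_sq_of_conjTranspose_mul_self_eq_one (hSt _)]
  obtain ⟨i, j, hij, hle⟩ := exists_ne_norm_sub_sq_le (by simpa using hn) v
  refine ⟨i, j, hij, ?_⟩
  rw [frobDist_eq_norm_sub]
  refine Real.le_sqrt_of_sq_le ?_
  simpa [hv, mul_comm, mul_left_comm, mul_assoc] using hle
end

section
/- Matrices X_1, ..., X_n ∈ St_F(d,r) achieve equality in the Stiefel simplex bound, min_{i≠j} ||X_i - X_j||_Fro = sqrt(2rn/(n-1)), if and only if all pairwise Frobenius distances are equal and sum_i X_i = 0. -/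
/-!
Flatten each matrix to the vector of its entries in `EuclideanSpace 𝕜 (Fin r × Fin d)`, so that the
Frobenius distance becomes a Euclidean distance and `Xᴴ X = 1` gives every point squared norm
`r = tr (Xᴴ X)`. Expanding the squares, `∑_{i ≠ j} ‖X_i - X_j‖² = 2 r n² - 2 ‖∑ X_i‖²`, so the
mean of the `n (n - 1)` squared distances is at most `2 r n / (n - 1)`. The minimum reaches this
value exactly when no distance exceeds the mean and the mean reaches its bound, that is, when all
distances are equal and `∑ X_i = 0`.
-/

open Matrix

open Finset RCLike WithLp

section SumOfSquares

variable {α : Type*} {s : Finset α} {g : α → ℝ} {m q : ℝ}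

theorem eq_of_forall_le_of_sum_sq_eq (hsum : ∑ a ∈ s, g a ^ 2 = #s * m ^ 2 - q)
    (hm : 0 ≤ m) (hq : 0 ≤ q) (hle : ∀ a ∈ s, m ≤ g a) : (∀ a ∈ s, g a = m) ∧ q = 0 := by
  have hsq : ∀ a ∈ s, 0 ≤ g a ^ 2 - m ^ 2 := fun a ha =>
    sub_nonneg.2 (pow_le_pow_left₀ hm (hle a ha) 2)
  have hexcess : ∑ a ∈ s, (g a ^ 2 - m ^ 2) = -q := by
    rw [sum_sub_distrib, hsum, sum_const, nsmul_eq_mul]; ring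
  have hq0 : q = 0 := le_antisymm (by linarith [sum_nonneg hsq]) hq
  refine ⟨fun a ha => ?_, hq0⟩
  have h := (sum_eq_zero_iff_of_nonneg hsq).1 (by rw [hexcess, hq0, neg_zero]) a ha
  exact (pow_left_inj₀ (hm.trans (hle a ha)) hm two_ne_zero).1 (sub_eq_zero.1 h)

theorem isLeast_image_iff_of_sum_sq_eq (hsum : ∑ a ∈ s, g a ^ 2 = #s * m ^ 2 - q)
    (hs : s.Nonempty) (hg : ∀ a ∈ s, 0 ≤ g a) (hm : 0 ≤ m) (hq : 0 ≤ q) :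
    IsLeast (g '' s) m ↔ (∀ a ∈ s, ∀ b ∈ s, g a = g b) ∧ q = 0 := by
  constructor
  · rintro ⟨-, hlow⟩
    obtain ⟨heq, hq0⟩ := eq_of_forall_le_of_sum_sq_eq hsum hm hq
      fun a ha => hlow (Set.mem_image_of_mem g ha)
    exact ⟨fun a ha b hb => (heq a ha).trans (heq b hb).symm, hq0⟩
  · rintro ⟨heq, rfl⟩
    obtain ⟨a₀, ha₀⟩ := hs
    have hconst : ∑ a ∈ s, g a ^ 2 = #s * g a₀ ^ 2 := by
      rw [sum_congr rfl fun a ha => by rw [heq a ha a₀ ha₀], sum_const, nsmul_eq_mul]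
    have hcard : (#s : ℝ) ≠ 0 := Nat.cast_ne_zero.2 (card_ne_zero_of_mem ha₀)
    have hga₀ : g a₀ = m := (pow_left_inj₀ (hg a₀ ha₀) hm two_ne_zero).1
      (mul_left_cancel₀ hcard (hconst.symm.trans (by rw [hsum, sub_zero])))
    refine ⟨⟨a₀, ha₀, hga₀⟩, ?_⟩
    rintro _ ⟨a, ha, rfl⟩
    rw [heq a ha a₀ ha₀, hga₀]

end SumOfSquares

section OffDiag

variable {ι : Type*} [Fintype ι]

theorem setOf_exists_ne_eq_image_offDiag {β : Type*} (f : ι → ι → β) :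
    {b | ∃ i j, i ≠ j ∧ b = f i j} =
      (fun p : ι × ι => f p.1 p.2) '' ↑(univ : Finset ι).offDiag := by
  ext; simp [eq_comm]

theorem cast_card_offDiag_univ {R : Type*} [CommRing R] :
    (#(univ : Finset ι).offDiag : R) = Fintype.card ι * (Fintype.card ι - 1) := by
  rw [offDiag_card, card_univ, Nat.cast_sub (Nat.le_mul_self _)]
  push_cast; ring

theorem sum_offDiag_norm_sub_sq (𝕜 : Type*) {E : Type*} [RCLike 𝕜] [NormedAddCommGroup E]
    [InnerProductSpace 𝕜 E] (x : ι → E) :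
    ∑ p ∈ univ.offDiag, ‖x p.1 - x p.2‖ ^ 2 =
      2 * Fintype.card ι * ∑ i, ‖x i‖ ^ 2 - 2 * ‖∑ i, x i‖ ^ 2 := by
  have hdiag : ∑ p ∈ univ.offDiag, ‖x p.1 - x p.2‖ ^ 2 = ∑ i, ∑ j, ‖x i - x j‖ ^ 2 := by
    rw [← sum_product']
    refine sum_subset (fun p _ => by simp) fun p _ hp => ?_
    simp_all [mem_offDiag]
  have hgram : ∑ i, ∑ j, re (inner 𝕜 (x i) (x j)) = ‖∑ i, x i‖ ^ 2 := by
    rw [← inner_self_eq_norm_sq (𝕜 := 𝕜), sum_inner]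
    simp only [inner_sum, map_sum]
  rw [hdiag]
  simp only [norm_sub_sq (𝕜 := 𝕜), sum_add_distrib, sum_sub_distrib, ← mul_sum, hgram, sum_const,
    card_univ, nsmul_eq_mul]
  ring

end OffDiag

section Stiefel

variable {𝕜 : Type*} [RCLike 𝕜] {d r : ℕ}

theorem norm_toLp_vec_sq {m n : Type*} [Fintype m] [Fintype n] (A : Matrix m n 𝕜) :
    ‖toLp 2 A.vec‖ ^ 2 = re (Aᴴ * A).trace := by
  rw [← inner_self_eq_norm_sq (𝕜 := 𝕜), EuclideanSpace.inner_toLp_toLp, dotProduct_comm,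
    star_vec_dotProduct_vec]

theorem frobDist_nonneg (A B : Matrix (Fin d) (Fin r) 𝕜) : 0 ≤ frobDist A B :=
  Real.sqrt_nonneg _

theorem frobDist_eq_norm_sub_s6 (A B : Matrix (Fin d) (Fin r) 𝕜) :
    frobDist A B = ‖toLp 2 A.vec - toLp 2 B.vec‖ := by
  rw [frobDist, ← toLp_sub, ← vec_sub, EuclideanSpace.norm_eq, Fintype.sum_prod_type, sum_comm]
  rfl

theorem sum_offDiag_frobDist_sq {ι : Type*} [Fintype ι]
    (X : ι → Matrix (Fin d) (Fin r) 𝕜) (hX : ∀ i, (X i)ᴴ * X i = 1) :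
    ∑ p ∈ univ.offDiag, frobDist (X p.1) (X p.2) ^ 2 =
      2 * r * Fintype.card ι ^ 2 - 2 * ‖toLp 2 (∑ i, X i).vec‖ ^ 2 := by
  have hnorm : ∀ i, ‖toLp 2 (X i).vec‖ ^ 2 = r := fun i => by
    rw [norm_toLp_vec_sq, hX i, trace_one]; simp
  simp only [frobDist_eq_norm_sub_s6, sum_offDiag_norm_sub_sq 𝕜 fun i => toLp 2 (X i).vec, hnorm,
    vec_sum, toLp_sum, sum_const, card_univ, nsmul_eq_mul]
  ring

end Stiefel

theorem stiefel_simplex_equality {𝕜 : Type*} [RCLike 𝕜] (d r n : ℕ) (hn : 2 ≤ n)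
    (X : Fin n → Matrix (Fin d) (Fin r) 𝕜)
    (hSt : ∀ i, (X i)ᴴ * X i = 1) :
    IsLeast {s : ℝ | ∃ i j : Fin n, i ≠ j ∧ s = frobDist (X i) (X j)}
        (Real.sqrt (2 * r * n / ((n : ℝ) - 1))) ↔
      ((∀ i j k l : Fin n, i ≠ j → k ≠ l →
          frobDist (X i) (X j) = frobDist (X k) (X l)) ∧
        ∑ i, X i = 0) := by
  have hn1 : (0 : ℝ) < n - 1 := sub_pos.2 (Nat.one_lt_cast.2 hn)
  have hsum : ∑ p ∈ univ.offDiag, frobDist (X p.1) (X p.2) ^ 2 =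
      #(univ : Finset (Fin n)).offDiag * Real.sqrt (2 * r * n / ((n : ℝ) - 1)) ^ 2
        - 2 * ‖toLp 2 (∑ i, X i).vec‖ ^ 2 := by
    rw [sum_offDiag_frobDist_sq X hSt, cast_card_offDiag_univ, Fintype.card_fin,
      Real.sq_sqrt (by positivity)]
    field_simp
  have hne : (univ : Finset (Fin n)).offDiag.Nonempty :=
    ⟨(⟨0, by omega⟩, ⟨1, by omega⟩), by simp [mem_offDiag]⟩
  rw [setOf_exists_ne_eq_image_offDiag, isLeast_image_iff_of_sum_sq_eq hsum hne
    (fun _ _ => frobDist_nonneg _ _) (Real.sqrt_nonneg _) (by positivity)]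
  refine and_congr ?_ (by simp [toLp_eq_zero])
  simp only [mem_offDiag, mem_univ, true_and, Prod.forall]
  exact ⟨fun h i j k l hij hkl => h i j hij k l hkl, fun h i j hij k l hkl => h i j k l hij hkl⟩
end
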